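/- For integers n ≥ 2 and 0 ≤ m ≤ n-1, define H₂ := Σ_{k=0}^{m} (-1)^k (1+2k)·C(n,m+1+k)·C(n,m-k). Then H₂ = n·C(n-1,m). -/

import Mathlib

/-!
Write `1 + 2k = (m + 1 + k) - (m - k)`. Absorption `j C(n, j) = n C(n - 1, j - 1)` followed by
Pascal's rule turns the `k`-th summand into `n (-1)^k (D k - D (k + 1))`, where
`D k = C(n - 1, m + k) C(n - 1, m - k)`. As `D (m + 1) = 0`, the alternating sum of these
differences is `2 ∑_{k ≤ m} (-1)^k D k - D 0`, which is the symmetric sum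
`∑_{|k| ≤ m} (-1)^k C(n - 1, m + k) C(n - 1, m - k)`. By the alternating Vandermonde identity
(compare coefficients of `X^(2m)` in `(1 - X)^(n-1) (1 + X)^(n-1) = (1 - X^2)^(n-1)`) this
equals `C(n - 1, m)`.
-/

/-- Binomial coefficient extended to integer arguments: 0 unless 0 ≤ k ≤ n. -/
def ichoose (n k : ℤ) : ℤ :=
  if 0 ≤ k ∧ k ≤ n then (n.toNat).choose k.toNat else 0

open Finset Polynomial

theorem sum_Icc_zero_natCast_eq_sum_range {M : Type*} [AddCommMonoid M] (f : ℤ → M) (m : ℕ) :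
    ∑ k ∈ Icc (0 : ℤ) m, f k = ∑ k ∈ range (m + 1), f k := by
  refine (sum_nbij' (↑) Int.toNat ?_ ?_ ?_ ?_ ?_).symm <;> simp +contextual

theorem sum_range_neg_one_pow_mul_sub {R : Type*} [CommRing R] (f : ℕ → R) (N : ℕ) :
    ∑ k ∈ range N, (-1) ^ k * (f k - f (k + 1)) =
      2 * ∑ k ∈ range N, (-1) ^ k * f k - f 0 + (-1) ^ N * f N := by
  induction N with
  | zero => simp
  | succ N ih => rw [sum_range_succ, ih, sum_range_succ, pow_succ]; ring

theorem sum_range_two_mul_add_one_of_palindrome {R : Type*} [CommRing R] (g : ℕ → R) (m : ℕ)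
    (hg : ∀ i j, i + j = 2 * m → g i = g j) :
    ∑ j ∈ range (2 * m + 1), g j = 2 * ∑ k ∈ range (m + 1), g (m + k) - g m := by
  have lower : ∑ j ∈ range m, g j = ∑ k ∈ range m, g (m + (k + 1)) := by
    rw [← sum_range_reflect]
    exact sum_congr rfl fun k hk => hg _ _ (by simp at hk; omega)
  rw [show 2 * m + 1 = m + (m + 1) by ring, sum_range_add, lower, sum_range_succ' (g <| m + ·),
    add_zero]
  ring

theorem coeff_one_sub_X_pow {R : Type*} [CommRing R] (p j : ℕ) :
    ((1 - X : R[X]) ^ p).coeff j = (-1) ^ j * p.choose j := by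
  rw [sub_eq_neg_add, add_pow, finsetSum_coeff]
  simp only [one_pow, mul_one, neg_pow (X : R[X]), mul_right_comm _ (X ^ _ : R[X]),
    ← C_eq_natCast, ← C_neg, ← C_1, ← C_pow, ← C_mul, coeff_C_mul_X_pow, sum_ite_eq,
    mem_range]
  split_ifs with hj
  · rfl
  · rw [Nat.choose_eq_zero_of_lt (by omega), Nat.cast_zero, mul_zero]

theorem sum_range_neg_one_pow_mul_choose_mul_choose (p m : ℕ) :
    ∑ j ∈ range (2 * m + 1), (-1 : ℤ) ^ j * p.choose j * p.choose (2 * m - j) =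
      (-1) ^ m * p.choose m := by
  have product : (1 - X : ℤ[X]) ^ p * (1 + X) ^ p = expand ℤ 2 ((1 - X) ^ p) := by
    rw [← mul_pow, map_pow, map_sub, map_one, expand_X]
    ring
  have coeffs := congrArg (coeff · (m * 2)) product
  rw [coeff_expand_mul two_pos, coeff_mul, mul_comm m 2,
    Nat.sum_antidiagonal_eq_sum_range_succ_mk] at coeffs
  simpa only [coeff_one_sub_X_pow, coeff_one_add_X_pow, mul_assoc] using coeffs

@[norm_cast]
theorem ichoose_natCast (n k : ℕ) : ichoose n k = n.choose k := by
  unfold ichoose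
  split_ifs with h
  · simp
  · rw [Nat.choose_eq_zero_of_lt (by omega), Nat.cast_zero]

theorem ichoose_of_neg (n : ℤ) {k : ℤ} (hk : k < 0) : ichoose n k = 0 :=
  if_neg (by omega)

theorem add_one_mul_ichoose_add_one {n : ℤ} (hn : 0 ≤ n) (k : ℤ) :
    (k + 1) * ichoose (n + 1) (k + 1) = (n + 1) * ichoose n k := by
  lift n to ℕ using hn
  rcases lt_trichotomy k (-1) with hk | rfl | hk
  · rw [ichoose_of_neg _ (by omega : k + 1 < 0), ichoose_of_neg n (by omega : k < 0)]
    ring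
  · norm_num [ichoose_of_neg]
  · lift k to ℕ using (by omega)
    exact_mod_cast (mul_comm _ _).trans (Nat.add_one_mul_choose_eq n k).symm

theorem ichoose_add_one_add_one {n : ℤ} (hn : 0 ≤ n) (k : ℤ) :
    ichoose (n + 1) (k + 1) = ichoose n k + ichoose n (k + 1) := by
  lift n to ℕ using hn
  rcases lt_trichotomy k (-1) with hk | rfl | hk
  · rw [ichoose_of_neg _ (by omega : k + 1 < 0), ichoose_of_neg n (by omega : k < 0),
      ichoose_of_neg n (by omega : k + 1 < 0), add_zero]
  · simp [ichoose]; omega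
  · lift k to ℕ using (by omega)
    exact_mod_cast Nat.choose_succ_succ' n k

theorem sub_mul_ichoose_mul_ichoose {n : ℤ} (hn : 0 < n) (a b : ℤ) :
    (a - b) * (ichoose n a * ichoose n b) =
      n * (ichoose (n - 1) (a - 1) * ichoose (n - 1) b -
        ichoose (n - 1) a * ichoose (n - 1) (b - 1)) := by
  have absorb := fun c => add_one_mul_ichoose_add_one (n := n - 1) (by omega) (c - 1)
  have pascal := fun c => ichoose_add_one_add_one (n := n - 1) (by omega) (c - 1)
  simp only [sub_add_cancel] at absorb pascal
  linear_combination ichoose n b * absorb a - ichoose n a * absorb b +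
    n * ichoose (n - 1) (a - 1) * pascal b - n * ichoose (n - 1) (b - 1) * pascal a

theorem two_mul_sum_range_neg_one_pow_mul_ichoose_mul_ichoose {p : ℤ} (hp : 0 ≤ p) (m : ℕ) :
    2 * ∑ k ∈ range (m + 1), (-1) ^ k * (ichoose p (m + k) * ichoose p (m - k)) -
      ichoose p m * ichoose p m = ichoose p m := by
  lift p to ℕ using hp
  set g : ℕ → ℤ := fun j => (-1) ^ j * (ichoose p j * ichoose p (2 * m - j)) with hg
  have vandermonde : ∑ j ∈ range (2 * m + 1), g j = (-1) ^ m * ichoose p m := by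
    rw [ichoose_natCast, ← sum_range_neg_one_pow_mul_choose_mul_choose]
    refine sum_congr rfl fun j hj => ?_
    rw [mem_range] at hj
    simp only [hg]
    rw [show (2 * m - j : ℤ) = (2 * m - j : ℕ) by omega, ichoose_natCast, ichoose_natCast]
    ring
  have palindrome : ∀ i j, i + j = 2 * m → g i = g j := by
    intro i j hij
    simp only [hg]
    rw [neg_one_pow_congr (Nat.even_add.mp (hij ▸ even_two_mul m)),
      show (2 * m - i : ℤ) = j by omega, show (2 * m - j : ℤ) = i by omega,
      mul_comm (ichoose _ _)]
  have shift (k : ℕ) :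
      g (m + k) = (-1) ^ m * ((-1) ^ k * (ichoose p (m + k) * ichoose p (m - k))) := by
    simp only [hg]
    push_cast
    rw [show (2 * m - (m + k) : ℤ) = m - k by ring, pow_add]
    ring
  have center := shift 0
  simp only [add_zero, Nat.cast_zero, sub_zero, pow_zero, one_mul] at center
  have folded := sum_range_two_mul_add_one_of_palindrome g m palindrome
  rw [vandermonde, center] at folded
  simp only [shift, ← mul_sum] at folded
  refine mul_left_cancel₀ (pow_ne_zero m (neg_ne_zero.mpr one_ne_zero)) ?_
  linear_combination -folded

theorem H2_identity_general (n m : ℤ) (hn : 2 ≤ n) (hm0 : 0 ≤ m) :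
    ∑ k ∈ Finset.Icc (0 : ℤ) m, (-1 : ℤ) ^ k.toNat * (1 + 2 * k) *
        (ichoose n (m + 1 + k) * ichoose n (m - k))
    = n * ichoose (n - 1) m := by
  lift m to ℕ using hm0
  set D : ℕ → ℤ := fun k => ichoose (n - 1) (m + k) * ichoose (n - 1) (m - k) with hD
  have summand (k : ℕ) : (-1 : ℤ) ^ (k : ℤ).toNat * (1 + 2 * k) *
      (ichoose n (m + 1 + k) * ichoose n (m - k)) = n * ((-1) ^ k * (D k - D (k + 1))) := by
    have split := sub_mul_ichoose_mul_ichoose (by omega : 0 < n) (m + 1 + k) (m - k)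
    simp only [hD, Int.toNat_natCast]
    push_cast
    rw [show (m + 1 + k : ℤ) - 1 = m + k by ring, show (m : ℤ) - k - 1 = m - (k + 1) by ring]
      at split
    rw [show (m : ℤ) + (k + 1) = m + 1 + k by ring]
    linear_combination (-1) ^ k * split
  have vanish : D (m + 1) = 0 := mul_eq_zero_of_right _ (ichoose_of_neg _ (by omega))
  rw [sum_Icc_zero_natCast_eq_sum_range, sum_congr rfl fun k _ => summand k, ← mul_sum,
    sum_range_neg_one_pow_mul_sub, vanish, mul_zero, add_zero]
  simpa only [hD, Nat.cast_zero, add_zero, sub_zero] using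
    congrArg (n * ·) (two_mul_sum_range_neg_one_pow_mul_ichoose_mul_ichoose (by omega) m)

theorem H2_identity (n m : ℤ) (hn : 2 ≤ n) (hm0 : 0 ≤ m) (hm1 : m ≤ n - 1) :
    ∑ k ∈ Finset.Icc (0 : ℤ) m, (-1 : ℤ) ^ k.toNat * (1 + 2 * k) *
        (ichoose n (m + 1 + k) * ichoose n (m - k))
    = n * ichoose (n - 1) m :=
  H2_identity_general n m hn hm0
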